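/- Correctness of the dynamic programming value: the infimum over φ ∈ ℝ of f^n(φ) equals the infimum of the penalised cost over all segmentations, i.e. it equals the infimum, over all integers m ≥ 0, all strictly increasing integer changepoint vectors 0 = τ_0 < τ_1 < ⋯ < τ_m < τ_{m+1} = n, and all (φ_0,…,φ_{m+1}) ∈ ℝ^{m+2}, of ∑_{i=0}^{m}[ C(τ_i, τ_{i+1}, φ_i, φ_{i+1}) + h(τ_{i+1}−τ_i) ] + β·(m+1). -/

import Mathlib

open Finset

/-!
A changepoint vector `τ ∈ T_n` with fitted values `φ_0, …, φ_k` and end value `φ` is the same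
data as a segmentation `0 = τ_0 < ⋯ < τ_{k+1} = n` with values `φ_0, …, φ_k, φ`, and the two
penalised costs agree, so both sides are infima of the same set of reals. As infima in `ℝ` are
only conditionally complete, that set must also be bounded below: segment costs are nonnegative
and there are at most `n` segments, each contributing at least `min_{1 ≤ d ≤ n} h d + β`.
For `n = 0` both sides are `0`: `f^0 ≡ 0`, and there is no segmentation of an empty series.
-/

/-- Segment cost `C(s,t,φ,ψ)`: cost of fitting data `y_{s+1:t}` with a linear
function taking value `φ` at time `s` and value `ψ` at time `t`. -/
noncomputable def segCost (y : ℕ → ℝ) (σ : ℝ) (s t : ℕ) (φ ψ : ℝ) : ℝ :=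
  (1 / σ ^ 2) * ∑ j ∈ Finset.Icc (s + 1) t,
    (y j - φ - ((ψ - φ) / ((t : ℝ) - (s : ℝ))) * ((j : ℝ) - (s : ℝ))) ^ 2

/-- `ValidCP t τ` : `τ` is a (possibly empty) strictly increasing vector of
changepoints `0 < τ₁ < ⋯ < τ_k < t`, i.e. an element of `T_t`. -/
def ValidCP (t : ℕ) (τ : List ℕ) : Prop :=
  τ.Chain' (· < ·) ∧ ∀ x ∈ τ, 0 < x ∧ x < t

/-- Penalised cost of segmenting `y_{1:t}` with changepoints `τ = (τ₁,…,τ_k)`,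
fitted values `φs 0, …, φs k` at times `0, τ₁, …, τ_k`, and fitted value `φ` at time `t`. -/
noncomputable def segTotal (y : ℕ → ℝ) (σ β : ℝ) (h : ℕ → ℝ) (t : ℕ)
    (τ : List ℕ) (φs : ℕ → ℝ) (φ : ℝ) : ℝ :=
  let p : ℕ → ℕ := fun i => (0 :: τ).getD i 0
  (∑ i ∈ Finset.range τ.length,
      (segCost y σ (p i) (p (i + 1)) (φs i) (φs (i + 1)) + h (p (i + 1) - p i)))
    + segCost y σ (p τ.length) t (φs τ.length) φ + h (t - p τ.length)
    + β * ((τ.length : ℝ) + 1)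

/-- `f_τ^t(φ)` : minimum penalised cost of segmenting `y_{1:t}` with changepoints `τ`
and fitted value `φ` at time `t`, minimised over the fitted values at the changepoints. -/
noncomputable def fseg (y : ℕ → ℝ) (σ β : ℝ) (h : ℕ → ℝ) (t : ℕ)
    (τ : List ℕ) (φ : ℝ) : ℝ :=
  ⨅ φs : ℕ → ℝ, segTotal y σ β h t τ φs φ

/-- `f^t(φ)` : minimum penalised cost of segmenting `y_{1:t}` with fitted value `φ`
at time `t`, minimised over all changepoint vectors in `T_t`; `f^0 ≡ 0`. -/
noncomputable def fDP (y : ℕ → ℝ) (σ β : ℝ) (h : ℕ → ℝ) (t : ℕ) (φ : ℝ) : ℝ :=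
  if t = 0 then 0 else ⨅ τ : {τ : List ℕ // ValidCP t τ}, fseg y σ β h t τ.1 φ

theorem iInf_iInf_iInf_eq_csInf {α ι κ μ : Type*} [ConditionallyCompleteLattice α]
    [Nonempty ι] [Nonempty κ] [Nonempty μ] {F : ι → κ → μ → α} {S : Set α} (hS : BddBelow S)
    (hmem : ∀ i j k, F i j k ∈ S) (hsurj : ∀ r ∈ S, ∃ i j k, F i j k = r) :
    ⨅ i, ⨅ j, ⨅ k, F i j k = sInf S := by
  obtain ⟨b, hb⟩ := hS
  have hF : ∀ i j k, b ≤ F i j k := fun i j k => hb (hmem i j k)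
  apply le_antisymm
  · obtain ⟨i, j, k⟩ : Nonempty (ι × κ × μ) := inferInstance
    refine le_csInf ⟨_, hmem i j k⟩ fun r hr => ?_
    obtain ⟨i, j, k, rfl⟩ := hsurj r hr
    refine (ciInf_le ⟨b, ?_⟩ i).trans <| (ciInf_le ⟨b, ?_⟩ j).trans (ciInf_le ⟨b, ?_⟩ k)
    · exact Set.forall_mem_range.2 fun i => le_ciInf fun j => le_ciInf (hF i j)
    · exact Set.forall_mem_range.2 fun j => le_ciInf (hF i j)
    · exact Set.forall_mem_range.2 (hF i j)
  · exact le_ciInf fun i => le_ciInf fun j => le_ciInf fun k => csInf_le ⟨b, hb⟩ (hmem i j k)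

lemma segCost_nonneg (y : ℕ → ℝ) (σ : ℝ) (s t : ℕ) (φ ψ : ℝ) : 0 ≤ segCost y σ s t φ ψ :=
  mul_nonneg (by positivity) (sum_nonneg fun _ _ => sq_nonneg _)

lemma strictMonoOn_Iic_of_lt_add_one {α : Type*} [Preorder α] {τ : ℕ → α} {m : ℕ}
    (hstep : ∀ i ≤ m, τ i < τ (i + 1)) : StrictMonoOn τ (Set.Iic (m + 1)) :=
  strictMonoOn_Iic_of_lt_succ fun i hi => hstep i (Nat.lt_succ_iff.mp hi)

/-- `τ_0 = 0, τ_1, …, τ_k, τ_{k+1} = t` for `τ = (τ_1, …, τ_k)`. -/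
def cpSeq (t : ℕ) (τ : List ℕ) : ℕ → ℕ :=
  Function.update (fun i => (0 :: τ).getD i 0) (τ.length + 1) t

lemma cpSeq_map_range {n m : ℕ} {τ : ℕ → ℕ} (h0 : τ 0 = 0) (hm : τ (m + 1) = n) :
    ∀ i ≤ m + 1, cpSeq n ((List.range m).map fun j => τ (j + 1)) i = τ i := by
  rintro (_ | i) hi
  · simp [cpSeq, h0]
  rcases Nat.lt_or_ge i m with hi | hi
  · rw [cpSeq, Function.update_of_ne (by simp; omega)]
    simp [hi]
  · obtain rfl : i = m := by omega
    simp [cpSeq, hm]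

lemma ValidCP.cpSeq_lt_add_one {t : ℕ} {τ : List ℕ} (hτ : ValidCP t τ) (ht : 0 < t) :
    ∀ i ≤ τ.length, cpSeq t τ i < cpSeq t τ (i + 1) := by
  intro i hi
  rw [cpSeq, Function.update_of_ne (by omega)]
  rcases hi.lt_or_eq with hi | rfl
  · have hchain : List.IsChain (· < ·) (0 :: τ) := by
      exact List.isChain_cons.2 ⟨fun x hx => (hτ.2 x (List.mem_of_mem_head? hx)).1, hτ.1⟩
    rw [Function.update_of_ne (by omega), List.getD_eq_getElem _ _ (by simp; omega),
      List.getD_eq_getElem _ _ (by simp; omega)]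
    exact hchain.getElem i (by simp; omega)
  · rw [Function.update_self, List.getD_eq_getElem _ _ (by simp)]
    rcases List.mem_cons.1 (List.getElem_mem (l := 0 :: τ) (n := τ.length) (by simp)) with h | h
    · rwa [h]
    · exact (hτ.2 _ h).2

lemma validCP_map_range {n m : ℕ} {τ : ℕ → ℕ} (h0 : τ 0 = 0) (hm : τ (m + 1) = n)
    (hstep : ∀ i ≤ m, τ i < τ (i + 1)) :
    ValidCP n ((List.range m).map fun j => τ (j + 1)) := by
  have hmono := strictMonoOn_Iic_of_lt_add_one hstep
  refine ⟨(List.isChain_map _).2 ((List.isChain_range _ _).2 fun j hj => hstep (j + 1) (by omega)),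
    fun x hx => ?_⟩
  obtain ⟨j, hj, rfl⟩ := List.mem_map.1 hx
  have hj : j + 1 < m + 1 := by simpa using hj
  exact ⟨h0 ▸ hmono (Set.mem_Iic.2 (Nat.zero_le _)) (Set.mem_Iic.2 hj.le) j.succ_pos,
    hm ▸ hmono (Set.mem_Iic.2 hj.le) (Set.mem_Iic.2 le_rfl) hj⟩

section PenalisedCost

variable (y : ℕ → ℝ) (σ β : ℝ) (h : ℕ → ℝ)

noncomputable def penalisedCost (m : ℕ) (τ : ℕ → ℕ) (φ : ℕ → ℝ) : ℝ :=
  (∑ i ∈ range (m + 1),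
      (segCost y σ (τ i) (τ (i + 1)) (φ i) (φ (i + 1)) + h (τ (i + 1) - τ i)))
    + β * ((m : ℝ) + 1)

lemma penalisedCost_congr {m : ℕ} {τ τ' : ℕ → ℕ} {φ φ' : ℕ → ℝ}
    (hτ : ∀ i ≤ m + 1, τ i = τ' i) (hφ : ∀ i ≤ m + 1, φ i = φ' i) :
    penalisedCost y σ β h m τ φ = penalisedCost y σ β h m τ' φ' := by
  unfold penalisedCost
  congr 1
  refine sum_congr rfl fun i hi => ?_
  have hi : i < m + 1 := mem_range.mp hi
  rw [hτ i hi.le, hτ (i + 1) hi, hφ i hi.le, hφ (i + 1) hi]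

lemma segTotal_eq_penalisedCost (t : ℕ) (τ : List ℕ) (φs : ℕ → ℝ) (φ : ℝ) :
    segTotal y σ β h t τ φs φ =
      penalisedCost y σ β h τ.length (cpSeq t τ) (Function.update φs (τ.length + 1) φ) := by
  have hτ : ∀ i ≤ τ.length, cpSeq t τ i = (0 :: τ).getD i 0 :=
    fun i hi => Function.update_of_ne (by omega) ..
  have hφ : ∀ i ≤ τ.length, Function.update φs (τ.length + 1) φ i = φs i :=
    fun i hi => Function.update_of_ne (by omega) ..
  rw [penalisedCost, sum_range_succ, hτ _ le_rfl, hφ _ le_rfl, cpSeq, Function.update_self,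
    Function.update_self, ← cpSeq]
  simp only [segTotal, add_assoc]
  congr 1
  refine sum_congr rfl fun i hi => ?_
  have hi : i < τ.length := mem_range.mp hi
  rw [hτ i hi.le, hτ (i + 1) hi, hφ i hi.le, hφ (i + 1) hi]

lemma le_penalisedCost {n m : ℕ} {τ : ℕ → ℕ} (φ : ℕ → ℝ) {b : ℝ} (hb0 : b ≤ 0)
    (hb : ∀ d ∈ Set.Icc 1 n, b ≤ h d + β)
    (hm : τ (m + 1) = n) (hstep : ∀ i ≤ m, τ i < τ (i + 1)) :
    n * b ≤ penalisedCost y σ β h m τ φ := by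
  have hmono := strictMonoOn_Iic_of_lt_add_one hstep
  have hid : ∀ i ≤ m + 1, i ≤ τ i := by
    intro i
    induction i with
    | zero => omega
    | succ i ih => intro hi; have := hstep i (by omega); have := ih (by omega); omega
  have hlen : m + 1 ≤ n := hm ▸ hid (m + 1) le_rfl
  calc (n : ℝ) * b ≤ (m + 1 : ℕ) * b := mul_le_mul_of_nonpos_right (by exact_mod_cast hlen) hb0
    _ = ∑ _i ∈ range (m + 1), b := by simp
    _ ≤ ∑ i ∈ range (m + 1),
          (segCost y σ (τ i) (τ (i + 1)) (φ i) (φ (i + 1)) + (h (τ (i + 1) - τ i) + β)) := by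
        refine sum_le_sum fun i hi => ?_
        have hi : i + 1 ≤ m + 1 := mem_range.mp hi
        have hlt := hstep i (by omega)
        have hle : τ (i + 1) ≤ n :=
          hm ▸ hmono.monotoneOn (Set.mem_Iic.2 hi) (Set.mem_Iic.2 le_rfl) hi
        have := hb (τ (i + 1) - τ i) ⟨by omega, by omega⟩
        linarith [segCost_nonneg y σ (τ i) (τ (i + 1)) (φ i) (φ (i + 1))]
    _ = penalisedCost y σ β h m τ φ := by
        simp only [penalisedCost, ← add_assoc, sum_add_distrib, sum_const, card_range,
          nsmul_eq_mul]
        push_cast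
        ring

lemma penalisedCost_eq_segTotal {n m : ℕ} {τ : ℕ → ℕ} (φ : ℕ → ℝ)
    (h0 : τ 0 = 0) (hm : τ (m + 1) = n) :
    penalisedCost y σ β h m τ φ =
      segTotal y σ β h n ((List.range m).map fun j => τ (j + 1)) φ (φ (m + 1)) := by
  rw [segTotal_eq_penalisedCost, List.length_map, List.length_range, Function.update_eq_self]
  exact penalisedCost_congr y σ β h (fun i hi => (cpSeq_map_range h0 hm i hi).symm) fun _ _ => rfl

end PenalisedCost

theorem statement4_general (n : ℕ) (y : ℕ → ℝ) (σ : ℝ) (β : ℝ) (h : ℕ → ℝ) :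
    (⨅ φ : ℝ, fDP y σ β h n φ) =
      sInf {r : ℝ | ∃ (m : ℕ) (τ : ℕ → ℕ) (φv : ℕ → ℝ),
        τ 0 = 0 ∧ τ (m + 1) = n ∧ (∀ i ≤ m, τ i < τ (i + 1)) ∧
        r = (∑ i ∈ Finset.range (m + 1),
              (segCost y σ (τ i) (τ (i + 1)) (φv i) (φv (i + 1)) + h (τ (i + 1) - τ i)))
            + β * ((m : ℝ) + 1)} := by
  rcases Nat.eq_zero_or_pos n with rfl | hn
  · simp only [fDP, ↓reduceIte, ciInf_const]
    convert Real.sInf_empty.symm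
    refine Set.eq_empty_of_forall_notMem ?_
    rintro r ⟨m, τ, φ, h0, hm, hstep, -⟩
    have hlt := strictMonoOn_Iic_of_lt_add_one hstep (Set.mem_Iic.2 (Nat.zero_le _))
      (Set.mem_Iic.2 le_rfl) m.succ_pos
    omega
  simp only [fDP, if_neg hn.ne', fseg]
  have : Nonempty {τ : List ℕ // ValidCP n τ} := ⟨⟨[], List.isChain_nil, by simp⟩⟩
  obtain ⟨b, hb⟩ := ((Set.finite_Icc 1 n).image fun d => h d + β).bddBelow
  apply iInf_iInf_iInf_eq_csInf
  · refine ⟨n * min b 0, ?_⟩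
    rintro r ⟨m, τ, φ, h0, hm, hstep, rfl⟩
    exact le_penalisedCost y σ β h φ (min_le_right b 0)
      (fun d hd => (min_le_left b 0).trans (hb ⟨d, hd, rfl⟩)) hm hstep
  · rintro φ ⟨τ, hτ⟩ φs
    exact ⟨τ.length, cpSeq n τ, _, by simp [cpSeq], Function.update_self ..,
      hτ.cpSeq_lt_add_one hn, segTotal_eq_penalisedCost y σ β h n τ φs φ⟩
  · rintro r ⟨m, τ, φ, h0, hm, hstep, rfl⟩
    exact ⟨φ (m + 1), ⟨_, validCP_map_range h0 hm hstep⟩, φ,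
      (penalisedCost_eq_segTotal y σ β h φ h0 hm).symm⟩

/-- correctness of the DP value: `inf_φ f^n(φ)` equals the infimum
of the penalised cost over all segmentations `0 = τ₀ < τ₁ < ⋯ < τ_m < τ_{m+1} = n`
and all fitted values `φ₀,…,φ_{m+1}`. -/
theorem statement4 (n : ℕ) (hn : 1 ≤ n) (y : ℕ → ℝ) (σ : ℝ) (hσ : 0 < σ)
    (β : ℝ) (hβ : 0 < β) (h : ℕ → ℝ) :
    (⨅ φ : ℝ, fDP y σ β h n φ) =
      sInf {r : ℝ | ∃ (m : ℕ) (τ : ℕ → ℕ) (φv : ℕ → ℝ),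
        τ 0 = 0 ∧ τ (m + 1) = n ∧ (∀ i ≤ m, τ i < τ (i + 1)) ∧
        r = (∑ i ∈ Finset.range (m + 1),
              (segCost y σ (τ i) (τ (i + 1)) (φv i) (φv (i + 1)) + h (τ (i + 1) - τ i)))
            + β * ((m : ℝ) + 1)} :=
  statement4_general n y σ β h
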